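/- Suppose m(β) := E Σ_{i≥1} T_i^β < 1 and E C^β < ∞ for some β ∈ (0,1]. Then E (W*)^β ≤ (E C^β) / (1 − m(β)) < ∞; in particular W* = Σ_{v∈V} L(v)C(v) < ∞ almost surely. -/

import Mathlib

open MeasureTheory ProbabilityTheory ENNReal NNReal Filter

noncomputable section

abbrev UHTree := List ℕ

/-- The branch weight `L(v)`: `L(∅) = 1`, `L(vi) = L(v) T_i(v)`. -/
def branchL {Ω : Type*} : (UHTree → ℕ → Ω → ℝ≥0∞) → UHTree → Ω → ℝ≥0∞
  | _, [], _ => 1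
  | T, i :: v, ω => T (.nil) i ω * branchL (fun u j => T (i :: u) j) v ω

/-- The random pair `(C(v), T(v))` attached to vertex `v`. -/
def pairRV {Ω : Type*} (C : UHTree → Ω → ℝ≥0∞) (T : UHTree → ℕ → Ω → ℝ≥0∞) (v : UHTree)
    (ω : Ω) : ℝ≥0∞ × (ℕ → ℝ≥0∞) :=
  (C v ω, fun i => T v i ω)

/-- `W* = Σ_{v ∈ V} L(v) C(v)`, with values in `[0,∞]`. -/
def Wstar {Ω : Type*} (C : UHTree → Ω → ℝ≥0∞) (T : UHTree → ℕ → Ω → ℝ≥0∞) (ω : Ω) : ℝ≥0∞ :=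
  ∑' v : UHTree, branchL T v ω * C v ω

/-!
Subadditivity of `x ↦ x ^ β` gives `(W*)^β ≤ Σ_v L(v)^β C(v)^β`. The pairs `(C, T)` along the
ancestral line `v.take 0, …, v.take n = v` of a vertex are i.i.d., so
`E[L(v)^β C(v)^β] = E C^β · Π_k E T_{v[k]}^β`; summed over the words of length `n` this is
`m(β)^n E C^β`, and the geometric series gives the bound. A finite `β`-th moment forces `W* < ∞`
almost surely.
-/

theorem ENNReal.rpow_tsum_le_tsum_rpow {ι : Type*} (f : ι → ℝ≥0∞) {p : ℝ} (hp0 : 0 < p)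
    (hp1 : p ≤ 1) : (∑' i, f i) ^ p ≤ ∑' i, f i ^ p := by
  have hsum : ∀ s : Finset ι, (∑ i ∈ s, f i) ^ p ≤ ∑ i ∈ s, f i ^ p := fun s =>
    Finset.le_sum_of_subadditive (· ^ p) (ENNReal.zero_rpow_of_pos hp0).le
      (fun a b => ENNReal.rpow_add_le_add_rpow a b hp0.le hp1) s f
  rw [ENNReal.tsum_eq_iSup_sum, (ENNReal.monotone_rpow_of_nonneg hp0.le).map_iSup_of_continuousAt
    ENNReal.continuous_rpow_const.continuousAt (ENNReal.zero_rpow_of_pos hp0)]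
  exact iSup_le fun s => (hsum s).trans (ENNReal.sum_le_tsum s)

theorem ENNReal.tsum_pi_fin_prod {α : Type*} (m : α → ℝ≥0∞) (n : ℕ) :
    ∑' w : Fin n → α, ∏ i, m (w i) = (∑' a, m a) ^ n := by
  induction n with
  | zero => simp
  | succ n ih =>
    rw [← (Fin.consEquiv fun _ => α).tsum_eq, ENNReal.tsum_prod', pow_succ', ← ih,
      ← ENNReal.tsum_mul_right]
    simp [Fin.consEquiv, Fin.prod_univ_succ, ENNReal.tsum_mul_left]

theorem ENNReal.tsum_list_map_prod {α : Type*} (m : α → ℝ≥0∞) :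
    ∑' v : List α, (v.map m).prod = ∑' n : ℕ, (∑' a, m a) ^ n := by
  rw [← List.equivSigmaTuple.symm.tsum_eq, ENNReal.tsum_sigma']
  simp [List.equivSigmaTuple, List.map_ofFn, List.prod_ofFn, ENNReal.tsum_pi_fin_prod]

theorem lintegral_prod_comp_of_iIndepFun_of_identDistrib {Ω ι κ E : Type*} [MeasurableSpace Ω]
    [MeasurableSpace E] {μ : Measure Ω} [Fintype κ] {X : ι → Ω → E}
    (hX : ∀ i, Measurable (X i)) (hind : iIndepFun X μ) {i₀ : ι}
    (hident : ∀ i, IdentDistrib (X i) (X i₀) μ μ) {a : κ → ι} (ha : Function.Injective a)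
    {g : κ → E → ℝ≥0∞} (hg : ∀ k, Measurable (g k)) :
    ∫⁻ ω, ∏ k, g k (X (a k) ω) ∂μ = ∏ k, ∫⁻ ω, g k (X i₀ ω) ∂μ := by
  refine (lintegral_prod_eq_prod_lintegral_of_indepFun (X := fun k ω => g k (X (a k) ω)) _
    ((hind.precomp ha).comp g hg) fun k => (hg k).comp (hX _)).trans ?_
  exact Finset.prod_congr rfl fun k _ => ((hident (a k)).comp (hg k)).lintegral_eq

theorem branchL_eq_prod {Ω : Type*} (T : UHTree → ℕ → Ω → ℝ≥0∞) (v : UHTree) (ω : Ω) :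
    branchL T v ω = ∏ k : Fin v.length, T (v.take k) v[k] ω := by
  induction v generalizing T with
  | nil => simp [branchL]
  | cons i v ih => simp [branchL, ih, Fin.prod_univ_succ]

theorem measurable_branchL {Ω : Type*} [MeasurableSpace Ω] {T : UHTree → ℕ → Ω → ℝ≥0∞}
    (hT : ∀ u i, Measurable (T u i)) (v : UHTree) : Measurable (branchL T v) := by
  simp_rw [funext (branchL_eq_prod T v)]
  exact Finset.measurable_prod _ fun k _ => hT _ _

theorem lintegral_branchL_mul_rpow {Ω : Type*} [MeasurableSpace Ω] {μ : Measure Ω}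
    {C : UHTree → Ω → ℝ≥0∞} {T : UHTree → ℕ → Ω → ℝ≥0∞}
    (hmeas : ∀ v, Measurable (pairRV C T v)) (hindep : iIndepFun (pairRV C T) μ)
    (hident : ∀ v, IdentDistrib (pairRV C T v) (pairRV C T []) μ μ) {β : ℝ} (hβ : 0 ≤ β)
    (v : UHTree) :
    ∫⁻ ω, (branchL T v ω * C v ω) ^ β ∂μ
      = (v.map fun i => ∫⁻ ω, T [] i ω ^ β ∂μ).prod * ∫⁻ ω, C [] ω ^ β ∂μ := by
  -- the strict ancestors `v.take k` contribute `T_{v[k]}`, the last one, `v` itself, `C`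
  let g : Fin (v.length + 1) → ℝ≥0∞ × (ℕ → ℝ≥0∞) → ℝ≥0∞ :=
    Fin.lastCases (fun p => p.1 ^ β) fun k p => p.2 v[k] ^ β
  have hg : ∀ k, Measurable (g k) := Fin.lastCases
    (by simpa [g] using measurable_fst.pow_const β)
    fun k => by simpa [g] using ((measurable_pi_apply _).comp measurable_snd).pow_const β
  have htake : Function.Injective fun k : Fin (v.length + 1) => v.take k := fun k l h =>
    Fin.ext (by simpa [List.length_take_of_le k.is_le, List.length_take_of_le l.is_le]
      using congrArg List.length h)
  have := lintegral_prod_comp_of_iIndepFun_of_identDistrib hmeas hindep hident htake hg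
  simp only [Fin.getElem_fin, pairRV, Fin.prod_univ_castSucc, Fin.val_castSucc,
    Fin.lastCases_castSucc, Fin.val_last, List.take_length, Fin.lastCases_last, g] at this
  rw [← Fin.prod_univ_fun_getElem, ← this]
  simp [branchL_eq_prod, ENNReal.mul_rpow_of_nonneg _ _ hβ, ENNReal.prod_rpow_of_nonneg hβ]

theorem measurable_Wstar {Ω : Type*} [MeasurableSpace Ω] {C : UHTree → Ω → ℝ≥0∞}
    {T : UHTree → ℕ → Ω → ℝ≥0∞} (hmeas : ∀ v, Measurable (pairRV C T v)) :
    Measurable (Wstar C T) :=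
  .tsum fun v =>
    (measurable_branchL (fun u i => (measurable_pi_apply i).comp (hmeas u).snd) v).mul
      (hmeas v).fst

theorem lintegral_Wstar_rpow_le {Ω : Type*} [MeasurableSpace Ω] {μ : Measure Ω}
    {C : UHTree → Ω → ℝ≥0∞} {T : UHTree → ℕ → Ω → ℝ≥0∞}
    (hmeas : ∀ v, Measurable (pairRV C T v)) (hindep : iIndepFun (pairRV C T) μ)
    (hident : ∀ v, IdentDistrib (pairRV C T v) (pairRV C T []) μ μ) {β : ℝ} (hβ0 : 0 < β)
    (hβ1 : β ≤ 1) :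
    ∫⁻ ω, Wstar C T ω ^ β ∂μ
      ≤ (∫⁻ ω, C [] ω ^ β ∂μ) / (1 - ∫⁻ ω, ∑' i : ℕ, T [] i ω ^ β ∂μ) := by
  have hT : ∀ u i, Measurable (T u i) := fun u i => (measurable_pi_apply i).comp (hmeas u).snd
  have hm_tsum : ∫⁻ ω, ∑' i : ℕ, T [] i ω ^ β ∂μ = ∑' i : ℕ, ∫⁻ ω, T [] i ω ^ β ∂μ :=
    lintegral_tsum fun i => ((hT [] i).pow_const β).aemeasurable
  calc ∫⁻ ω, Wstar C T ω ^ β ∂μ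
      ≤ ∫⁻ ω, ∑' v, (branchL T v ω * C v ω) ^ β ∂μ :=
        lintegral_mono fun ω => ENNReal.rpow_tsum_le_tsum_rpow _ hβ0 hβ1
    _ = ∑' v, ∫⁻ ω, (branchL T v ω * C v ω) ^ β ∂μ :=
        lintegral_tsum fun v =>
          (((measurable_branchL hT v).mul (hmeas v).fst).pow_const β).aemeasurable
    _ = (∑' v : UHTree, (v.map fun i => ∫⁻ ω, T [] i ω ^ β ∂μ).prod) * ∫⁻ ω, C [] ω ^ β ∂μ := by
        simp_rw [lintegral_branchL_mul_rpow hmeas hindep hident hβ0.le]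
        exact ENNReal.tsum_mul_right
    _ = (∫⁻ ω, C [] ω ^ β ∂μ) / (1 - ∫⁻ ω, ∑' i : ℕ, T [] i ω ^ β ∂μ) := by
        rw [ENNReal.tsum_list_map_prod, ← hm_tsum, ENNReal.tsum_geometric, div_eq_mul_inv, mul_comm]

theorem moment_bound_Wstar_general
    {Ω : Type*} [MeasurableSpace Ω] (μ : Measure Ω)
    (C : UHTree → Ω → ℝ≥0∞) (T : UHTree → ℕ → Ω → ℝ≥0∞)
    (hmeas : ∀ v, Measurable (pairRV C T v))
    (hindep : iIndepFun (pairRV C T) μ)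
    (hident : ∀ v, IdentDistrib (pairRV C T v) (pairRV C T (.nil)) μ μ)
    (β : ℝ) (hβ0 : 0 < β) (hβ1 : β ≤ 1)
    (hm : ∫⁻ ω, ∑' i : ℕ, T (.nil) i ω ^ β ∂μ < 1)
    (hC : ∫⁻ ω, C (.nil) ω ^ β ∂μ < ∞) :
    (∫⁻ ω, Wstar C T ω ^ β ∂μ
        ≤ (∫⁻ ω, C (.nil) ω ^ β ∂μ) / (1 - ∫⁻ ω, ∑' i : ℕ, T (.nil) i ω ^ β ∂μ))
    ∧ (∀ᵐ ω ∂μ, Wstar C T ω < ∞) := by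
  have hbound := lintegral_Wstar_rpow_le hmeas hindep hident hβ0 hβ1
  refine ⟨hbound, ?_⟩
  have hfin : ∫⁻ ω, Wstar C T ω ^ β ∂μ < ∞ :=
    hbound.trans_lt (ENNReal.div_lt_top hC.ne (tsub_pos_of_lt hm).ne')
  filter_upwards [ae_lt_top ((measurable_Wstar hmeas).pow_const β) hfin.ne] with ω hω
  exact (ENNReal.rpow_lt_top_iff_of_pos hβ0).mp hω

theorem moment_bound_Wstar
    {Ω : Type*} [MeasurableSpace Ω] (μ : Measure Ω) [IsProbabilityMeasure μ]
    (C : UHTree → Ω → ℝ≥0∞) (T : UHTree → ℕ → Ω → ℝ≥0∞)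
    (hmeas : ∀ v, Measurable (pairRV C T v))
    (hindep : iIndepFun (pairRV C T) μ)
    (hident : ∀ v, IdentDistrib (pairRV C T v) (pairRV C T (.nil)) μ μ)
    (β : ℝ) (hβ0 : 0 < β) (hβ1 : β ≤ 1)
    (hm : ∫⁻ ω, ∑' i : ℕ, T (.nil) i ω ^ β ∂μ < 1)
    (hC : ∫⁻ ω, C (.nil) ω ^ β ∂μ < ∞) :
    (∫⁻ ω, Wstar C T ω ^ β ∂μ
        ≤ (∫⁻ ω, C (.nil) ω ^ β ∂μ) / (1 - ∫⁻ ω, ∑' i : ℕ, T (.nil) i ω ^ β ∂μ))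
    ∧ (∀ᵐ ω ∂μ, Wstar C T ω < ∞) :=
  moment_bound_Wstar_general μ C T hmeas hindep hident β hβ0 hβ1 hm hC
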